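/- arXiv:1909.09833 — 4 statements merged into one kernel-verified Lean document; each statement's English description precedes it below -/
import Mathlib

section
/- Let ω be a radial weight on [0,1) (positive, measurable, integrable) and let ω̂(r) = ∫_r^1 ω(t) dt. Then ω is a doubling weight (i.e., there exists C > 0 with ω̂(r) ≤ C ω̂((1+r)/2) for all 0 ≤ r < 1) if and only if there exists b > 0 such that the function t ↦ ω̂(t)/(1-t)^b is essentially increasing on [0,1) (i.e., there is C' > 0 with ω̂(s)/(1-s)^b ≤ C' ω̂(t)/(1-t)^b whenever 0 ≤ s ≤ t < 1). -/
open MeasureTheory Set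

noncomputable section

/-- The tail integral `ω̂(r) = ∫_r^1 ω(t) dt` of a radial weight. -/
def what (ω : ℝ → ℝ) (r : ℝ) : ℝ := ∫ t in r..1, ω t

/-- A radial weight: positive, measurable and integrable on `[0,1)`. -/
def IsRadialWeight (ω : ℝ → ℝ) : Prop :=
  (∀ t ∈ Set.Ico (0:ℝ) 1, 0 < ω t) ∧ Measurable ω ∧ IntegrableOn ω (Set.Ico (0:ℝ) 1)

/-- ω is doubling: `ω̂(r) ≤ C ω̂((1+r)/2)`. -/
def IsDoubling (ω : ℝ → ℝ) : Prop :=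
  ∃ C > 0, ∀ r ∈ Set.Ico (0:ℝ) 1, what ω r ≤ C * what ω ((1 + r) / 2)

lemma rw_intervalIntegrable {ω : ℝ → ℝ} (hω : IsRadialWeight ω) {a b : ℝ}
    (ha : 0 ≤ a) (hab : a ≤ b) (hb : b ≤ 1) : IntervalIntegrable ω volume a b :=
  (intervalIntegrable_iff_integrableOn_Ico_of_le hab).mpr
    (hω.2.2.mono_set (Ico_subset_Ico ha hb))

lemma rw_ae_nonneg {ω : ℝ → ℝ} (hω : IsRadialWeight ω) {a b : ℝ}
    (ha : 0 ≤ a) (hb : b ≤ 1) : 0 ≤ᵐ[volume.restrict (Ioc a b)] ω := by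
  have hne : ∀ᵐ x : ℝ, x ≠ (1:ℝ) := by
    refine ae_iff.mpr ?_
    simp [measure_singleton (1:ℝ)]
  filter_upwards [ae_restrict_mem measurableSet_Ioc, ae_restrict_of_ae hne] with x hx hx1
  exact (hω.1 x ⟨le_trans ha hx.1.le, lt_of_le_of_ne (hx.2.trans hb) hx1⟩).le

lemma what_anti {ω : ℝ → ℝ} (hω : IsRadialWeight ω) {s t : ℝ}
    (hs : 0 ≤ s) (hst : s ≤ t) (ht : t ≤ 1) : what ω t ≤ what ω s := by
  unfold what
  exact intervalIntegral.integral_mono_interval hst ht le_rfl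
    (rw_ae_nonneg hω hs le_rfl) (rw_intervalIntegrable hω hs (hst.trans ht) le_rfl)

lemma what_pos {ω : ℝ → ℝ} (hω : IsRadialWeight ω) {t : ℝ}
    (h0 : 0 ≤ t) (h1 : t < 1) : 0 < what ω t := by
  unfold what
  refine intervalIntegral.intervalIntegral_pos_of_pos_on
    (rw_intervalIntegrable hω h0 h1.le le_rfl) (fun x hx => ?_) h1
  exact hω.1 x ⟨le_trans h0 hx.1.le, hx.2⟩

/-- A radial weight is doubling iff for some `b > 0` the function
`t ↦ ω̂(t)/(1-t)^b` is essentially increasing on `[0,1)`. -/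
theorem doubling_iff_essentially_increasing (ω : ℝ → ℝ) (hω : IsRadialWeight ω) :
    IsDoubling ω ↔
      ∃ b > (0:ℝ), ∃ C' > (0:ℝ), ∀ s t : ℝ, 0 ≤ s → s ≤ t → t < 1 →
        what ω s / (1 - s) ^ b ≤ C' * (what ω t / (1 - t) ^ b) := by
  constructor
  · rintro ⟨C₀, hC₀, hD₀⟩
    -- replace C₀ by C := max C₀ 2 ≥ 2
    set C : ℝ := max C₀ 2 with hCdef
    have hC2 : (2:ℝ) ≤ C := le_max_right _ _
    have hC0 : (0:ℝ) < C := lt_of_lt_of_le two_pos hC2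
    have hD : ∀ r ∈ Set.Ico (0:ℝ) 1, what ω r ≤ C * what ω ((1 + r) / 2) := by
      intro r hr
      refine (hD₀ r hr).trans (mul_le_mul_of_nonneg_right (le_max_left _ _) ?_)
      have hr2 : (0:ℝ) ≤ (1 + r)/2 := by linarith [hr.1]
      have hr2' : (1 + r)/2 < 1 := by linarith [hr.2]
      exact (what_pos hω hr2 hr2').le
    set b : ℝ := Real.logb 2 C with hbdef
    have hb1 : (1:ℝ) ≤ b := by
      rw [hbdef]
      calc (1:ℝ) = Real.logb 2 2 := by simp
        _ ≤ Real.logb 2 C := Real.logb_le_logb_of_le (by norm_num) (by norm_num) hC2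
    have hb0 : (0:ℝ) < b := lt_of_lt_of_le one_pos hb1
    have hC_eq : (2:ℝ) ^ b = C := by
      rw [hbdef]
      exact Real.rpow_logb two_pos (by norm_num) hC0
    refine ⟨b, hb0, C, hC0, fun s t hs hst ht1 => ?_⟩
    have hs1 : s < 1 := lt_of_le_of_lt hst ht1
    -- iteration lemma
    have hiter : ∀ n : ℕ, what ω s ≤ C ^ n * what ω (1 - (1 - s) / 2 ^ n) := by
      intro n
      induction n with
      | zero => simp
      | succ n ih =>
        set sn : ℝ := 1 - (1 - s) / 2 ^ n with hsn
        have h2n : (1:ℝ) ≤ 2 ^ n := one_le_pow₀ (by norm_num)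
        have h2np : (0:ℝ) < 2 ^ n := by positivity
        have hsn0 : 0 ≤ sn := by
          rw [hsn]
          have : (1 - s) / 2 ^ n ≤ 1 := by
            rw [div_le_one h2np]; linarith
          linarith
        have hsn1 : sn < 1 := by
          rw [hsn]
          have : 0 < (1 - s) / 2 ^ n := div_pos (by linarith) h2np
          linarith
        have hdb := hD sn ⟨hsn0, hsn1⟩
        have hmid : (1 + sn) / 2 = 1 - (1 - s) / 2 ^ (n + 1) := by
          rw [hsn]; field_simp; ring
        calc what ω s ≤ C ^ n * what ω sn := ih
          _ ≤ C ^ n * (C * what ω ((1 + sn)/2)) :=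
              mul_le_mul_of_nonneg_left hdb (by positivity)
          _ = C ^ (n+1) * what ω (1 - (1 - s) / 2 ^ (n+1)) := by rw [hmid]; ring
    -- choose n
    set R : ℝ := (1 - s) / (1 - t) with hR
    have ht1' : (0:ℝ) < 1 - t := by linarith
    have hs1' : (0:ℝ) < 1 - s := by linarith
    have hR1 : (1:ℝ) ≤ R := by
      rw [hR, le_div_iff₀ ht1']; linarith
    have hRpos : 0 < R := lt_of_lt_of_le one_pos hR1
    have hlogR0 : 0 ≤ Real.logb 2 R := Real.logb_nonneg (by norm_num) hR1
    set n : ℕ := ⌈Real.logb 2 R⌉₊ with hn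
    have hnge : Real.logb 2 R ≤ (n:ℝ) := Nat.le_ceil _
    have hnlt : (n:ℝ) < Real.logb 2 R + 1 := by
      exact Nat.ceil_lt_add_one hlogR0
    -- 2^n ≥ R
    have h2nR : R ≤ (2:ℝ) ^ n := by
      calc R = (2:ℝ) ^ Real.logb 2 R := (Real.rpow_logb two_pos (by norm_num) hRpos).symm
        _ ≤ (2:ℝ) ^ (n:ℝ) := by
            exact Real.rpow_le_rpow_left_iff (by norm_num : (1:ℝ) < 2) |>.mpr hnge
        _ = (2:ℝ) ^ n := by rw [Real.rpow_natCast]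
    -- 2^n ≤ 2 * R
    have h2nle : ((2:ℝ) ^ n : ℝ) ≤ 2 * R := by
      calc ((2:ℝ) ^ n : ℝ) = (2:ℝ) ^ (n:ℝ) := (Real.rpow_natCast _ _).symm
        _ ≤ (2:ℝ) ^ (Real.logb 2 R + 1) := by
            exact Real.rpow_le_rpow_left_iff (by norm_num : (1:ℝ) < 2) |>.mpr hnlt.le
        _ = 2 * R := by
            rw [Real.rpow_add two_pos, Real.rpow_logb two_pos (by norm_num) hRpos]
            ring
    -- s_n ≥ t
    have hsn_ge : t ≤ 1 - (1 - s) / 2 ^ n := by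
      have h2np : (0:ℝ) < 2 ^ n := by positivity
      have : (1 - s) / 2 ^ n ≤ 1 - t := by
        rw [div_le_iff₀ h2np]
        calc 1 - s = R * (1 - t) := by rw [hR]; field_simp
          _ ≤ 2 ^ n * (1 - t) := mul_le_mul_of_nonneg_right h2nR ht1'.le
          _ = (1 - t) * 2 ^ n := by ring
      linarith
    have hsn1 : 1 - (1 - s) / 2 ^ n ≤ 1 := by
      have : (0:ℝ) ≤ (1 - s) / 2 ^ n := by positivity
      linarith
    have hkey : what ω s ≤ C ^ n * what ω t := by
      calc what ω s ≤ C ^ n * what ω (1 - (1 - s) / 2 ^ n) := hiter n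
        _ ≤ C ^ n * what ω t := by
            refine mul_le_mul_of_nonneg_left ?_ (by positivity)
            exact what_anti hω (le_trans hs hst) hsn_ge hsn1
    -- C^n ≤ C * R^b
    have hCn : (C:ℝ) ^ n ≤ C * R ^ b := by
      have h1 : (C:ℝ) ^ n = ((2:ℝ) ^ n) ^ b := by
        rw [← hC_eq, ← Real.rpow_natCast ((2:ℝ)^b) n, ← Real.rpow_natCast (2:ℝ) n,
          ← Real.rpow_mul (by norm_num), ← Real.rpow_mul (by norm_num), mul_comm]
      rw [h1]
      calc ((2:ℝ) ^ n) ^ b ≤ (2 * R) ^ b := by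
            apply Real.rpow_le_rpow (by positivity) h2nle hb0.le
        _ = 2 ^ b * R ^ b := Real.mul_rpow (by norm_num) hRpos.le
        _ = C * R ^ b := by rw [hC_eq]
    have hwt : 0 ≤ what ω t := (what_pos hω (le_trans hs hst) ht1).le
    have hfinal : what ω s ≤ C * R ^ b * what ω t :=
      hkey.trans (mul_le_mul_of_nonneg_right hCn hwt)
    -- convert to the divided form
    have hRb : R ^ b = (1 - s) ^ b / (1 - t) ^ b := by
      rw [hR, Real.div_rpow hs1'.le ht1'.le]
    have hps : (0:ℝ) < (1 - s) ^ b := Real.rpow_pos_of_pos hs1' b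
    have hpt : (0:ℝ) < (1 - t) ^ b := Real.rpow_pos_of_pos ht1' b
    rw [div_le_iff₀ hps]
    calc what ω s ≤ C * R ^ b * what ω t := hfinal
      _ = C * (what ω t / (1 - t) ^ b) * (1 - s) ^ b := by
          rw [hRb]; field_simp
  · rintro ⟨b, hb, C', hC', H⟩
    refine ⟨C' * 2 ^ b, by positivity, fun r hr => ?_⟩
    obtain ⟨hr0, hr1⟩ := hr
    have h1 : r ≤ (1 + r) / 2 := by linarith
    have h2 : (1 + r) / 2 < 1 := by linarith
    have := H r ((1 + r)/2) hr0 h1 h2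
    have hmid : (1:ℝ) - (1 + r)/2 = (1 - r)/2 := by ring
    rw [hmid] at this
    have hr1' : (0:ℝ) < 1 - r := by linarith
    have hps : (0:ℝ) < (1 - r) ^ b := Real.rpow_pos_of_pos hr1' b
    have hdiv : ((1 - r)/2) ^ b = (1 - r) ^ b / 2 ^ b := Real.div_rpow hr1'.le (by norm_num : (0:ℝ) ≤ 2) b
    rw [hdiv] at this
    have h2b : (0:ℝ) < (2:ℝ) ^ b := Real.rpow_pos_of_pos two_pos b
    rw [div_le_iff₀ hps] at this
    refine this.trans (le_of_eq ?_)
    field_simp [hps.ne', h2b.ne']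
end
end

section
/- Let ω be a radial weight on [0,1) with tail ω̂(r) = ∫_r^1 ω(t) dt. Then ω is a reverse doubling weight (i.e., there exist K > 1 and C > 1 with ω̂(r) ≥ C ω̂(1 - (1-r)/K) for all r ∈ (0,1)) if and only if there exists a > 0 such that t ↦ ω̂(t)/(1-t)^a is essentially decreasing on [0,1). -/
open MeasureTheory Set

noncomputable section

/-- ω is reverse doubling: there are `K > 1`, `C > 1` with
`ω̂(r) ≥ C ω̂(1-(1-r)/K)` for all `r ∈ (0,1)`. -/
def IsReverseDoubling (ω : ℝ → ℝ) : Prop :=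
  ∃ K > (1:ℝ), ∃ C > (1:ℝ), ∀ r ∈ Set.Ioo (0:ℝ) 1,
    C * what ω (1 - (1 - r) / K) ≤ what ω r

section Aux

variable {ω : ℝ → ℝ}

lemma aux_intervalIntegrable (hω : IsRadialWeight ω) {u v : ℝ} (hu : 0 ≤ u) (huv : u ≤ v)
    (hv : v ≤ 1) : IntervalIntegrable ω volume u v := by
  rw [intervalIntegrable_iff_integrableOn_Ioc_of_le huv]
  exact ((integrableOn_Icc_iff_integrableOn_Ico (f := ω) (a := 0) (b := 1)).mpr hω.2.2).mono_set
    (fun x hx => ⟨hu.trans hx.1.le, hx.2.trans hv⟩)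

lemma what_mono (hω : IsRadialWeight ω) {u v : ℝ} (hu : 0 ≤ u) (huv : u ≤ v) (hv : v < 1) :
    what ω v ≤ what ω u := by
  have h1 : IntervalIntegrable ω volume u v := aux_intervalIntegrable hω hu huv hv.le
  have h2 : IntervalIntegrable ω volume v 1 :=
    aux_intervalIntegrable hω (hu.trans huv) hv.le le_rfl
  have hadd := intervalIntegral.integral_add_adjacent_intervals h1 h2
  have hnn : 0 ≤ ∫ t in u..v, ω t := by
    apply intervalIntegral.integral_nonneg huv
    intro x hx
    exact (hω.1 x ⟨hu.trans hx.1, lt_of_le_of_lt hx.2 hv⟩).le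
  simp only [what]
  linarith [hadd]

lemma what_pos_s1 (hω : IsRadialWeight ω) {u : ℝ} (hu : 0 ≤ u) (hv : u < 1) : 0 < what ω u := by
  apply intervalIntegral.intervalIntegral_pos_of_pos_on
    (aux_intervalIntegrable hω hu hv.le le_rfl)
    (fun x hx => hω.1 x ⟨hu.trans hx.1.le, hx.2⟩) hv

lemma aux_iterate (hω : IsRadialWeight ω) {K C : ℝ} (hK : 1 < K)
    (hRD : ∀ r ∈ Set.Ioo (0:ℝ) 1, C * what ω (1 - (1 - r) / K) ≤ what ω r)
    (hC : 0 < C) :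
    ∀ n : ℕ, ∀ r ∈ Set.Ioo (0:ℝ) 1, C ^ n * what ω (1 - (1 - r) / K ^ n) ≤ what ω r := by
  intro n
  induction n with
  | zero => intro r hr; simp
  | succ n ih =>
    intro r hr
    have hKn : (1:ℝ) ≤ K ^ n := one_le_pow₀ hK.le
    have hKn' : (0:ℝ) < K ^ n := lt_of_lt_of_le one_pos hKn
    have h1r : 0 < 1 - r := by linarith [hr.2]
    have hr' : 1 - (1 - r) / K ^ n ∈ Set.Ioo (0:ℝ) 1 := by
      constructor
      · have : (1 - r) / K ^ n ≤ 1 - r := by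
          rw [div_le_iff₀ hKn']
          nlinarith
        nlinarith [hr.1]
      · have : 0 < (1 - r) / K ^ n := div_pos h1r hKn'
        linarith
    have key := hRD _ hr'
    have heq : 1 - (1 - (1 - (1 - r) / K ^ n)) / K = 1 - (1 - r) / K ^ (n + 1) := by
      field_simp
      ring
    rw [heq] at key
    calc C ^ (n + 1) * what ω (1 - (1 - r) / K ^ (n + 1))
        = C ^ n * (C * what ω (1 - (1 - r) / K ^ (n + 1))) := by ring
      _ ≤ C ^ n * what ω (1 - (1 - r) / K ^ n) := by
          apply mul_le_mul_of_nonneg_left key (pow_nonneg hC.le n)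
      _ ≤ what ω r := ih r hr

/-- The core estimate: for `0 < s ≤ t < 1`,
`ω̂(t) (1-s)^a ≤ C ω̂(s) (1-t)^a` with `a = log C / log K`. -/
lemma aux_core (hω : IsRadialWeight ω) {K C : ℝ} (hK : 1 < K) (hC : 1 < C)
    (hRD : ∀ r ∈ Set.Ioo (0:ℝ) 1, C * what ω (1 - (1 - r) / K) ≤ what ω r)
    {s t : ℝ} (hs : 0 < s) (hst : s ≤ t) (ht : t < 1) :
    what ω t * (1 - s) ^ (Real.log C / Real.log K) ≤
      C * (what ω s * (1 - t) ^ (Real.log C / Real.log K)) := by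
  set a : ℝ := Real.log C / Real.log K with ha_def
  have hK0 : (0:ℝ) < K := lt_trans one_pos hK
  have hC0 : (0:ℝ) < C := lt_trans one_pos hC
  have hlogK : 0 < Real.log K := Real.log_pos hK
  have hlogC : 0 < Real.log C := Real.log_pos hC
  have ha : 0 < a := div_pos hlogC hlogK
  have h1t : 0 < 1 - t := by linarith
  have h1s : 0 < 1 - s := by linarith
  set Q : ℝ := (1 - s) / (1 - t) with hQ_def
  have hQ1 : 1 ≤ Q := by rw [le_div_iff₀ h1t]; linarith
  have hQ0 : 0 < Q := lt_of_lt_of_le one_pos hQ1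
  set n : ℕ := ⌊Real.log Q / Real.log K⌋₊ with hn_def
  have hlogQ : 0 ≤ Real.log Q := Real.log_nonneg hQ1
  have hfl : (n : ℝ) ≤ Real.log Q / Real.log K :=
    Nat.floor_le (div_nonneg hlogQ hlogK.le)
  have hfl' : Real.log Q / Real.log K < n + 1 := Nat.lt_floor_add_one _
  have hKn0 : (0:ℝ) < K ^ n := pow_pos hK0 n
  -- K^n ≤ Q
  have h1 : K ^ n ≤ Q := by
    have : Real.log (K ^ n) ≤ Real.log Q := by
      rw [Real.log_pow]
      calc (n : ℝ) * Real.log K ≤ (Real.log Q / Real.log K) * Real.log K :=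
            mul_le_mul_of_nonneg_right hfl hlogK.le
        _ = Real.log Q := by field_simp
    exact (Real.log_le_log_iff hKn0 hQ0).mp this
  -- Q ≤ K^(n+1)
  have h2 : Q ≤ K ^ (n + 1) := by
    have : Real.log Q ≤ Real.log (K ^ (n + 1)) := by
      rw [Real.log_pow]
      push_cast
      calc Real.log Q = (Real.log Q / Real.log K) * Real.log K := by field_simp
        _ ≤ ((n:ℝ) + 1) * Real.log K := mul_le_mul_of_nonneg_right hfl'.le hlogK.le
    exact (Real.log_le_log_iff hQ0 (pow_pos hK0 (n+1))).mp this
  -- K^a = C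
  have hKaC : K ^ a = C := by
    rw [ha_def, Real.rpow_def_of_pos hK0]
    rw [mul_div_assoc', mul_comm, mul_div_assoc, div_self hlogK.ne', mul_one, Real.exp_log hC0]
  -- Q^a ≤ C^(n+1)
  have h3 : Q ^ a ≤ C ^ (n + 1) := by
    calc Q ^ a ≤ (K ^ (n+1) : ℝ) ^ a := Real.rpow_le_rpow hQ0.le h2 ha.le
      _ = (K ^ a) ^ (n+1) := by
          rw [← Real.rpow_natCast K (n+1), ← Real.rpow_natCast (K ^ a) (n+1),
            ← Real.rpow_mul hK0.le, ← Real.rpow_mul hK0.le, mul_comm]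
      _ = C ^ (n + 1) := by rw [hKaC]
  -- monotonicity step
  have hu : 1 - (1 - s) / K ^ n ≤ t := by
    have : 1 - t ≤ (1 - s) / K ^ n := by
      rw [le_div_iff₀ hKn0]
      calc (1 - t) * K ^ n = K ^ n * (1 - t) := by ring
        _ ≤ Q * (1 - t) := mul_le_mul_of_nonneg_right h1 h1t.le
        _ = 1 - s := by rw [hQ_def]; field_simp
    linarith
  have hu0 : s ≤ 1 - (1 - s) / K ^ n := by
    have : (1 - s) / K ^ n ≤ 1 - s := by
      rw [div_le_iff₀ hKn0]
      have hp : (1:ℝ) ≤ K ^ n := one_le_pow₀ hK.le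
      nlinarith
    linarith
  have hmono : what ω t ≤ what ω (1 - (1 - s) / K ^ n) :=
    what_mono hω (by linarith : (0:ℝ) ≤ 1 - (1 - s) / K ^ n) hu ht
  have hiter := aux_iterate hω hK hRD hC0 n s ⟨hs, lt_of_le_of_lt hst ht⟩
  have hkey : C ^ n * what ω t ≤ what ω s :=
    le_trans (mul_le_mul_of_nonneg_left hmono (pow_nonneg hC0.le n)) hiter
  -- combine
  have hsplit : (1 - s) ^ a = Q ^ a * (1 - t) ^ a := by
    rw [← Real.mul_rpow hQ0.le h1t.le]
    congr 1
    rw [hQ_def]; field_simp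
  have hW : 0 ≤ what ω t := (what_pos_s1 hω (by linarith : (0:ℝ) ≤ t) ht).le
  have hpt : (0:ℝ) ≤ (1 - t) ^ a := Real.rpow_nonneg h1t.le a
  calc what ω t * (1 - s) ^ a = (Q ^ a * what ω t) * (1 - t) ^ a := by rw [hsplit]; ring
    _ ≤ ((C ^ (n+1)) * what ω t) * (1 - t) ^ a := by
        apply mul_le_mul_of_nonneg_right (mul_le_mul_of_nonneg_right h3 hW) hpt
    _ = C * ((C ^ n * what ω t) * (1 - t) ^ a) := by ring
    _ ≤ C * (what ω s * (1 - t) ^ a) :=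
        mul_le_mul_of_nonneg_left (mul_le_mul_of_nonneg_right hkey hpt) hC0.le

end Aux

/-- A radial weight is reverse doubling iff for some `a > 0` the function
`t ↦ ω̂(t)/(1-t)^a` is essentially decreasing on `[0,1)`. -/
theorem reverseDoubling_iff_essentially_decreasing (ω : ℝ → ℝ) (hω : IsRadialWeight ω) :
    IsReverseDoubling ω ↔
      ∃ a > (0:ℝ), ∃ C' > (0:ℝ), ∀ s t : ℝ, 0 ≤ s → s ≤ t → t < 1 →
        what ω t / (1 - t) ^ a ≤ C' * (what ω s / (1 - s) ^ a) := by
  constructor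
  · rintro ⟨K, hK, C, hC, hRD⟩
    have hK0 : (0:ℝ) < K := lt_trans one_pos hK
    have hC0 : (0:ℝ) < C := lt_trans one_pos hC
    set a : ℝ := Real.log C / Real.log K with ha_def
    have ha : 0 < a := div_pos (Real.log_pos hC) (Real.log_pos hK)
    have h2a : (1:ℝ) ≤ (2:ℝ) ^ a := Real.one_le_rpow one_le_two ha.le
    refine ⟨a, ha, C * 2 ^ a, by nlinarith, ?_⟩
    intro s t hs hst ht
    have h1t : 0 < 1 - t := by linarith
    have h1s : 0 < 1 - s := by linarith
    have hpt : (0:ℝ) < (1 - t) ^ a := Real.rpow_pos_of_pos h1t a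
    have hps : (0:ℝ) < (1 - s) ^ a := Real.rpow_pos_of_pos h1s a
    rw [mul_div_assoc', div_le_div_iff₀ hpt hps]
    -- goal: what ω t * (1-s)^a ≤ C * 2^a * what ω s * (1-t)^a
    rcases eq_or_lt_of_le hs with hs0 | hs0
    · -- s = 0
      rcases eq_or_lt_of_le hst with ht0 | ht0
      · -- t = s
        rw [← ht0, ← hs0]
        have hW0 : 0 ≤ what ω 0 := (what_pos_s1 hω le_rfl one_pos).le
        simp only [sub_zero, Real.one_rpow, mul_one]
        nlinarith [mul_le_mul_of_nonneg_right (show (1:ℝ) ≤ C * 2 ^ a by nlinarith) hW0]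
      · -- 0 = s < t
        rw [← hs0] at ht0 ⊢
        set s' : ℝ := min t (1/2) with hs'_def
        have hs'0 : 0 < s' := lt_min ht0 (by norm_num)
        have hs't : s' ≤ t := min_le_left _ _
        have hcore := aux_core hω hK hC hRD hs'0 hs't ht
        have hs'half : s' ≤ 1/2 := min_le_right _ _
        have h1s' : (1:ℝ)/2 ≤ 1 - s' := by linarith
        have hhalf : ((1:ℝ)/2) ^ a ≤ (1 - s') ^ a :=
          Real.rpow_le_rpow (by norm_num) h1s' ha.le
        have hWs' : what ω s' ≤ what ω 0 := what_mono hω le_rfl hs'0.le (by linarith)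
        have hWt : 0 ≤ what ω t := (what_pos_s1 hω (hs.trans hst) ht).le
        have hpt' : (0:ℝ) ≤ (1 - t) ^ a := hpt.le
        have hhalf' : ((1:ℝ)/2) ^ a = 1 / 2 ^ a := by
          rw [Real.div_rpow zero_le_one (by norm_num : (0:ℝ) ≤ 2), Real.one_rpow]
        have h2a0 : (0:ℝ) < 2 ^ a := Real.rpow_pos_of_pos two_pos a
        have step1 : what ω t * ((1:ℝ)/2) ^ a ≤ C * (what ω 0 * (1 - t) ^ a) := by
          calc what ω t * ((1:ℝ)/2) ^ a ≤ what ω t * (1 - s') ^ a :=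
                mul_le_mul_of_nonneg_left hhalf hWt
            _ ≤ C * (what ω s' * (1 - t) ^ a) := hcore
            _ ≤ C * (what ω 0 * (1 - t) ^ a) :=
                mul_le_mul_of_nonneg_left (mul_le_mul_of_nonneg_right hWs' hpt') hC0.le
        have hgoal : what ω t ≤ C * 2 ^ a * what ω 0 * (1 - t) ^ a := by
          rw [hhalf'] at step1
          have := mul_le_mul_of_nonneg_right step1 h2a0.le
          calc what ω t = what ω t * (1 / 2 ^ a) * 2 ^ a := by field_simp
            _ ≤ C * (what ω 0 * (1 - t) ^ a) * 2 ^ a := this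
            _ = C * 2 ^ a * what ω 0 * (1 - t) ^ a := by ring
        calc what ω t * (1 - 0) ^ a = what ω t := by
              rw [sub_zero, Real.one_rpow, mul_one]
          _ ≤ C * 2 ^ a * what ω 0 * (1 - t) ^ a := hgoal
    · -- 0 < s
      have hcore := aux_core hω hK hC hRD hs0 hst ht
      have hWs : 0 ≤ what ω s := (what_pos_s1 hω hs (lt_of_le_of_lt hst ht)).le
      have hcnn : (0:ℝ) ≤ C * (what ω s * (1 - t) ^ a) :=
        mul_nonneg hC0.le (mul_nonneg hWs hpt.le)
      calc what ω t * (1 - s) ^ a ≤ C * (what ω s * (1 - t) ^ a) := hcore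
        _ = C * (what ω s * (1 - t) ^ a) * 1 := by ring
        _ ≤ C * (what ω s * (1 - t) ^ a) * 2 ^ a := mul_le_mul_of_nonneg_left h2a hcnn
        _ = C * 2 ^ a * what ω s * (1 - t) ^ a := by ring
  · rintro ⟨a, ha, C', hC', hED⟩
    set K : ℝ := max 2 ((2 * C') ^ (1/a)) with hK_def
    have hK2 : (2:ℝ) ≤ K := le_max_left _ _
    have hK1 : (1:ℝ) < K := lt_of_lt_of_le one_lt_two hK2
    have hK0 : (0:ℝ) < K := lt_trans one_pos hK1
    have h2C' : (0:ℝ) < 2 * C' := by linarith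
    have hKa : 2 * C' ≤ K ^ a := by
      calc 2 * C' = (2 * C') ^ ((1/a) * a) := by
            rw [one_div_mul_cancel ha.ne', Real.rpow_one]
        _ = ((2 * C') ^ (1/a)) ^ a := by rw [Real.rpow_mul h2C'.le]
        _ ≤ K ^ a := Real.rpow_le_rpow (Real.rpow_nonneg h2C'.le _)
              (le_max_right _ _) ha.le
    have hKa0 : (0:ℝ) < K ^ a := Real.rpow_pos_of_pos hK0 a
    refine ⟨K, hK1, 2, one_lt_two, ?_⟩
    intro r hr
    have h1r : 0 < 1 - r := by linarith [hr.2]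
    set t : ℝ := 1 - (1 - r) / K with ht_def
    have hdiv : 0 < (1 - r) / K := div_pos h1r hK0
    have hdiv1 : (1 - r) / K ≤ 1 - r := by
      rw [div_le_iff₀ hK0]; nlinarith
    have hrt : r ≤ t := by rw [ht_def]; linarith
    have ht1 : t < 1 := by rw [ht_def]; linarith
    have hed := hED r t hr.1.le hrt ht1
    have h1t : 1 - t = (1 - r) / K := by rw [ht_def]; ring
    have hpr : (0:ℝ) < (1 - r) ^ a := Real.rpow_pos_of_pos h1r a
    have hsplit : (1 - t) ^ a = (1 - r) ^ a / K ^ a := by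
      rw [h1t, Real.div_rpow h1r.le hK0.le]
    rw [hsplit] at hed
    have hWr : 0 < what ω r := what_pos_s1 hω hr.1.le hr.2
    have hWt : 0 ≤ what ω t := (what_pos_s1 hω (hr.1.le.trans hrt) ht1).le
    -- hed : what ω t / ((1-r)^a / K^a) ≤ C' * (what ω r / (1-r)^a)
    have hed2 : what ω t * K ^ a ≤ C' * what ω r := by
      have : what ω t / ((1 - r) ^ a / K ^ a) = what ω t * K ^ a / (1 - r) ^ a := by
        field_simp
      rw [this, mul_div_assoc'] at hed
      exact (div_le_div_iff_of_pos_right hpr).mp hed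
    have h1 : what ω t * (2 * C') ≤ C' * what ω r :=
      le_trans (mul_le_mul_of_nonneg_left hKa hWt) hed2
    nlinarith
end
end

section
/- Let ω be a doubling weight on [0,1). Then for all x ≥ 1, ∫_0^1 s^x ω(s) ds is comparable (with constants depending only on ω) to ω̂(1 - 1/x) = ∫_{1-1/x}^1 ω(t) dt. -/
open MeasureTheory Set

noncomputable section

namespace MomentAux

/-- a.e. points of any restricted Lebesgue measure are ≠ 1. -/
lemma ae_ne_one (S : Set ℝ) : ∀ᵐ s ∂(volume.restrict S), s ≠ (1:ℝ) := by
  refine ae_restrict_of_ae (ae_iff.mpr ?_)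
  have h : {a : ℝ | ¬ a ≠ 1} = {(1:ℝ)} := by ext a; simp
  rw [h]
  exact Real.volume_singleton

variable {ω : ℝ → ℝ}

lemma integrableOn_Icc (hω : IsRadialWeight ω) : IntegrableOn ω (Icc (0:ℝ) 1) := by
  have h1 : IntegrableOn ω ({(1:ℝ)} : Set ℝ) := by
    unfold IntegrableOn
    rw [Measure.restrict_eq_zero.mpr Real.volume_singleton]
    exact integrable_zero_measure
  have h2 : Icc (0:ℝ) 1 = Ico (0:ℝ) 1 ∪ {1} := (Set.Ico_union_right zero_le_one).symm
  rw [h2]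
  exact hω.2.2.union h1

lemma ii_omega (hω : IsRadialWeight ω) {a b : ℝ} (ha : a ∈ Icc (0:ℝ) 1)
    (hb : b ∈ Icc (0:ℝ) 1) : IntervalIntegrable ω volume a b :=
  ((integrableOn_Icc hω).mono_set (Set.uIcc_subset_Icc ha hb)).intervalIntegrable

lemma integrableOn_pow_mul (hω : IsRadialWeight ω) {x : ℝ} (hx : 0 ≤ x) :
    IntegrableOn (fun s => s ^ x * ω s) (Icc (0:ℝ) 1) := by
  have hmeas : AEStronglyMeasurable (fun s : ℝ => s ^ x * ω s)
      (volume.restrict (Icc (0:ℝ) 1)) := by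
    have : Measurable (fun s : ℝ => s ^ x * ω s) := by
      have h1 : Measurable (fun s : ℝ => s ^ x) := by fun_prop
      exact h1.mul hω.2.1
    exact this.aestronglyMeasurable
  refine (integrableOn_Icc hω).norm.mono' hmeas ?_
  rw [ae_restrict_iff' measurableSet_Icc]
  filter_upwards with s hs
  have h0 : 0 ≤ s ^ x := Real.rpow_nonneg hs.1 x
  have h1 : s ^ x ≤ 1 := Real.rpow_le_one hs.1 hs.2 hx
  rw [norm_mul, Real.norm_eq_abs (s ^ x), abs_of_nonneg h0]
  calc s ^ x * ‖ω s‖ ≤ 1 * ‖ω s‖ := by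
        exact mul_le_mul_of_nonneg_right h1 (norm_nonneg _)
    _ = ‖ω s‖ := one_mul _

lemma ii_pow_mul (hω : IsRadialWeight ω) {x : ℝ} (hx : 0 ≤ x) {a b : ℝ}
    (ha : a ∈ Icc (0:ℝ) 1) (hb : b ∈ Icc (0:ℝ) 1) :
    IntervalIntegrable (fun s => s ^ x * ω s) volume a b :=
  (((integrableOn_pow_mul hω hx)).mono_set (Set.uIcc_subset_Icc ha hb)).intervalIntegrable

lemma what_split (hω : IsRadialWeight ω) {a b : ℝ} (ha : a ∈ Icc (0:ℝ) 1)
    (hb : b ∈ Icc (0:ℝ) 1) :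
    (∫ t in a..b, ω t) + what ω b = what ω a :=
  intervalIntegral.integral_add_adjacent_intervals (ii_omega hω ha hb)
    (ii_omega hω hb ⟨zero_le_one, le_refl 1⟩)

lemma what_nonneg (hω : IsRadialWeight ω) {r : ℝ} (hr : r ∈ Icc (0:ℝ) 1) :
    0 ≤ what ω r := by
  refine intervalIntegral.integral_nonneg_of_ae_restrict hr.2 ?_
  filter_upwards [ae_ne_one (Icc r 1), ae_restrict_mem measurableSet_Icc] with s hs1 hs2
  exact (hω.1 s ⟨le_trans hr.1 hs2.1, lt_of_le_of_ne hs2.2 hs1⟩).le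

lemma what_anti (hω : IsRadialWeight ω) {r t : ℝ} (hr : 0 ≤ r) (hrt : r ≤ t) (ht : t ≤ 1) :
    what ω t ≤ what ω r := by
  have hmem_r : r ∈ Icc (0:ℝ) 1 := ⟨hr, le_trans hrt ht⟩
  have hmem_t : t ∈ Icc (0:ℝ) 1 := ⟨le_trans hr hrt, ht⟩
  have hsplit := what_split hω hmem_r hmem_t
  have hnn : 0 ≤ ∫ s in r..t, ω s := by
    refine intervalIntegral.integral_nonneg_of_ae_restrict hrt ?_
    filter_upwards [ae_ne_one (Icc r t), ae_restrict_mem measurableSet_Icc] with s hs1 hs2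
    exact (hω.1 s ⟨le_trans hr hs2.1, lt_of_le_of_ne (le_trans hs2.2 ht) hs1⟩).le
  linarith

/-- Iterated doubling: if `1 - r ≤ 2^n (1-t)` then `ω̂(r) ≤ C^n ω̂(t)`. -/
lemma iterate (hω : IsRadialWeight ω) {C : ℝ} (hC : 0 < C)
    (hdb : ∀ r ∈ Set.Ico (0:ℝ) 1, what ω r ≤ C * what ω ((1 + r) / 2)) :
    ∀ n : ℕ, ∀ r t : ℝ, 0 ≤ r → r < 1 → 0 ≤ t → t < 1 →
      1 - r ≤ 2 ^ n * (1 - t) → what ω r ≤ C ^ n * what ω t := by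
  intro n
  induction n with
  | zero =>
    intro r t hr hr1 ht ht1 h
    rw [pow_zero, one_mul] at h ⊢
    exact what_anti hω ht (by linarith) hr1.le
  | succ n ih =>
    intro r t hr hr1 ht ht1 h
    have h1 : what ω r ≤ C * what ω ((1 + r) / 2) := hdb r ⟨hr, hr1⟩
    have h2 : what ω ((1 + r) / 2) ≤ C ^ n * what ω t := by
      refine ih ((1 + r) / 2) t (by linarith) (by linarith) ht ht1 ?_
      have hp : (2:ℝ) ^ (n + 1) = 2 ^ n * 2 := pow_succ 2 n
      rw [hp] at h
      linarith
    calc what ω r ≤ C * (C ^ n * what ω t) :=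
          le_trans h1 (mul_le_mul_of_nonneg_left h2 hC.le)
      _ = C ^ (n + 1) * what ω t := by ring

lemma exp_bound {u : ℝ} (hu0 : 0 ≤ u) (hu1 : u ≤ 1) :
    Real.exp (-Real.log 2 * u) ≤ 1 - u / 2 := by
  have h := convexOn_exp.2 (Set.mem_univ (0:ℝ)) (Set.mem_univ (-Real.log 2))
    (by linarith : (0:ℝ) ≤ 1 - u) hu0 (by ring)
  simp only [smul_eq_mul, mul_zero, zero_add, Real.exp_zero, mul_one] at h
  have hlog : Real.exp (-Real.log 2) = 1 / 2 := by
    rw [Real.exp_neg, Real.exp_log (by norm_num : (0:ℝ) < 2)]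
    norm_num
  rw [hlog] at h
  calc Real.exp (-Real.log 2 * u) = Real.exp (u * -Real.log 2) := by ring_nf
    _ ≤ (1 - u) + u * (1 / 2) := h
    _ = 1 - u / 2 := by ring

end MomentAux

open MomentAux

/-- For a doubling weight ω, `∫_0^1 s^x ω(s) ds ≈ ω̂(1 - 1/x)` uniformly in `x ≥ 1`. -/
theorem moment_comparable_tail (ω : ℝ → ℝ) (hω : IsRadialWeight ω) (hd : IsDoubling ω) :
    ∃ c > (0:ℝ), ∃ C > (0:ℝ), ∀ x : ℝ, 1 ≤ x →
      c * what ω (1 - 1 / x) ≤ (∫ s in (0:ℝ)..1, s ^ x * ω s) ∧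
      (∫ s in (0:ℝ)..1, s ^ x * ω s) ≤ C * what ω (1 - 1 / x) := by
  obtain ⟨C, hC, hdb⟩ := hd
  -- the summable majorant for the upper bound
  set g : ℕ → ℝ := fun n => C ^ (n + 1) * Real.exp (-(2 ^ n : ℝ)) with hg
  have hgpos : ∀ n, 0 ≤ g n := by
    intro n
    exact mul_nonneg (pow_nonneg hC.le _) (Real.exp_pos _).le
  have hsum : Summable g := by
    refine summable_of_ratio_norm_eventually_le (r := 1/2) (by norm_num) ?_
    filter_upwards [Filter.eventually_ge_atTop (⌈2 * C⌉₊)] with n hn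
    have h1 : 2 * C ≤ (n : ℝ) := le_trans (Nat.le_ceil _) (by exact_mod_cast hn)
    have h2 : (n : ℝ) ≤ 2 ^ n := by exact_mod_cast (Nat.lt_two_pow_self (n := n)).le
    have h3 : (2 ^ n : ℝ) + 1 ≤ Real.exp (2 ^ n : ℝ) :=
      Real.add_one_le_exp _
    have key : C * Real.exp (-(2 ^ n : ℝ)) ≤ 1 / 2 := by
      rw [Real.exp_neg]
      rw [mul_inv_le_iff₀ (Real.exp_pos _)]
      nlinarith [Real.exp_pos ((2:ℝ) ^ n)]
    have hexp : Real.exp (-(2 ^ (n+1) : ℝ)) =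
        Real.exp (-(2 ^ n : ℝ)) * Real.exp (-(2 ^ n : ℝ)) := by
      rw [← Real.exp_add]
      congr 1
      rw [pow_succ]
      ring
    have hgn : g (n + 1) = (C * Real.exp (-(2 ^ n : ℝ))) * g n := by
      simp only [hg, hexp]
      ring
    rw [Real.norm_eq_abs, Real.norm_eq_abs, abs_of_nonneg (hgpos _), abs_of_nonneg (hgpos _),
      hgn]
    exact mul_le_mul_of_nonneg_right key (hgpos n)
  -- constants
  refine ⟨1 / (2 * C), by positivity, (∑' n, g n) + 1, ?_, ?_⟩
  · have : 0 ≤ ∑' n, g n := tsum_nonneg hgpos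
    linarith
  intro x hx
  have hx0 : (0:ℝ) < x := lt_of_lt_of_le one_pos hx
  have hinv0 : 0 < 1 / x := by positivity
  have hinv1 : 1 / x ≤ 1 := by
    rw [div_le_one hx0]; exact hx
  set R : ℝ := 1 - 1 / x with hR
  have hR0 : 0 ≤ R := by simp only [hR]; linarith
  have hR1 : R < 1 := by simp only [hR]; linarith
  have hRmem : R ∈ Icc (0:ℝ) 1 := ⟨hR0, hR1.le⟩
  have hWnn : 0 ≤ what ω R := what_nonneg hω hRmem
  set f : ℝ → ℝ := fun s => s ^ x * ω s with hf
  have hii : ∀ {a b : ℝ}, a ∈ Icc (0:ℝ) 1 → b ∈ Icc (0:ℝ) 1 →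
      IntervalIntegrable f volume a b := fun ha hb => ii_pow_mul hω hx0.le ha hb
  constructor
  · -- LOWER BOUND
    set m : ℝ := 1 - 1 / (2 * x) with hm
    have hmR : R ≤ m := by
      simp only [hm, hR]
      have : 1 / (2 * x) ≤ 1 / x := by
        apply div_le_div_of_nonneg_left one_pos.le hx0
        linarith
      linarith
    have hm1 : m < 1 := by
      have : 0 < 1 / (2 * x) := by positivity
      simp only [hm]; linarith
    have hm0 : 0 ≤ m := le_trans hR0 hmR
    have hmmem : m ∈ Icc (0:ℝ) 1 := ⟨hm0, hm1.le⟩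
    -- m ^ x ≥ 1/2
    have hmx : (1:ℝ)/2 ≤ m ^ x := by
      have h1 : Real.exp (-Real.log 2 * (1 / x)) ≤ m := by
        have := exp_bound hinv0.le hinv1
        have hmeq : m = 1 - (1 / x) / 2 := by
          simp only [hm]; ring
        rw [hmeq]
        exact this
      have h2 : Real.exp (-Real.log 2 * (1 / x)) ^ x = Real.exp (-Real.log 2) := by
        rw [← Real.exp_mul]
        congr 1
        field_simp
      have h3 : Real.exp (-Real.log 2) = 1 / 2 := by
        rw [Real.exp_neg, Real.exp_log (by norm_num : (0:ℝ) < 2)]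
        norm_num
      calc (1:ℝ)/2 = Real.exp (-Real.log 2 * (1 / x)) ^ x := by rw [h2, h3]
        _ ≤ m ^ x := Real.rpow_le_rpow (Real.exp_pos _).le h1 hx0.le
    -- ∫_m^1 f ≥ (1/2) ω̂(m)
    have hpart : (1/2) * what ω m ≤ ∫ s in m..1, f s := by
      have heq : ∫ s in m..1, (1/2) * ω s = (1/2) * what ω m := by
        rw [what]
        exact intervalIntegral.integral_const_mul _ _
      rw [← heq]
      refine intervalIntegral.integral_mono_ae_restrict hm1.le ?_ (hii hmmem ⟨zero_le_one, le_refl 1⟩) ?_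
      · exact (ii_omega hω hmmem ⟨zero_le_one, le_refl 1⟩).const_mul _
      · filter_upwards [ae_ne_one (Icc m 1), ae_restrict_mem measurableSet_Icc] with s hs1 hs2
        have hω_nn : 0 ≤ ω s :=
          (hω.1 s ⟨le_trans hm0 hs2.1, lt_of_le_of_ne hs2.2 hs1⟩).le
        have hsx : (1:ℝ)/2 ≤ s ^ x :=
          le_trans hmx (Real.rpow_le_rpow hm0 hs2.1 hx0.le)
        exact mul_le_mul_of_nonneg_right hsx hω_nn
    -- ∫_0^m f ≥ 0
    have hnn0m : 0 ≤ ∫ s in (0:ℝ)..m, f s := by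
      refine intervalIntegral.integral_nonneg_of_ae_restrict hm0 ?_
      filter_upwards [ae_ne_one (Icc 0 m), ae_restrict_mem measurableSet_Icc] with s hs1 hs2
      have hω_nn : 0 ≤ ω s :=
        (hω.1 s ⟨hs2.1, lt_of_le_of_ne (le_trans hs2.2 hm1.le) hs1⟩).le
      exact mul_nonneg (Real.rpow_nonneg hs2.1 x) hω_nn
    have hsplit : (∫ s in (0:ℝ)..m, f s) + (∫ s in m..1, f s) = ∫ s in (0:ℝ)..1, f s :=
      intervalIntegral.integral_add_adjacent_intervals
        (hii ⟨le_refl 0, zero_le_one⟩ hmmem) (hii hmmem ⟨zero_le_one, le_refl 1⟩)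
    -- doubling at R
    have hdbR : what ω R ≤ C * what ω m := by
      have h := hdb R ⟨hR0, hR1⟩
      have : (1 + R) / 2 = m := by
        simp only [hR, hm]; ring
      rwa [this] at h
    have : 1 / (2 * C) * what ω R ≤ (1/2) * what ω m := by
      rw [div_mul_eq_mul_div, div_le_iff₀ (by positivity : (0:ℝ) < 2 * C)]
      have hWm : 0 ≤ what ω m := what_nonneg hω hmmem
      nlinarith
    calc 1 / (2 * C) * what ω R ≤ (1/2) * what ω m := this
      _ ≤ ∫ s in m..1, f s := hpart
      _ ≤ ∫ s in (0:ℝ)..1, f s := by linarith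
  · -- UPPER BOUND
    obtain ⟨n0, hn0⟩ := pow_unbounded_of_one_lt x (one_lt_two (α := ℝ))
    set N : ℕ := n0 with hN
    have hxN : x ≤ 2 ^ (N + 1) := by
      have : (2:ℝ) ^ n0 ≤ 2 ^ (N + 1) := by
        apply pow_le_pow_right₀ one_le_two
        simp [hN]
      linarith
    set b : ℕ → ℝ := fun n => max (1 - 2 ^ n / x) 0 with hb
    have hb0 : b 0 = R := by
      simp only [hb, pow_zero, hR]
      exact max_eq_left (by linarith)
    have hbN : b (N + 1) = 0 := by
      simp only [hb]
      apply max_eq_right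
      have h2 : (1:ℝ) ≤ 2 ^ (N + 1) / x := by
        rw [le_div_iff₀ hx0]; linarith
      linarith
    have hbanti : ∀ n, b (n + 1) ≤ b n := by
      intro n
      apply max_le_max _ (le_refl 0)
      apply sub_le_sub_left
      refine (div_le_div_iff_of_pos_right hx0).mpr ?_
      exact pow_le_pow_right₀ one_le_two (Nat.le_succ n)
    have hbmem : ∀ n, b n ∈ Icc (0:ℝ) R := by
      intro n
      refine ⟨le_max_right _ _, ?_⟩
      apply max_le _ hR0
      simp only [hR]
      have h1 : (1:ℝ) ≤ 2 ^ n := by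
        calc (1:ℝ) = 1 ^ n := (one_pow n).symm
          _ ≤ 2 ^ n := by gcongr; norm_num
      have h2 : 1 / x ≤ 2 ^ n / x := (div_le_div_iff_of_pos_right hx0).mpr h1
      linarith
    -- each piece is bounded by `g k * ω̂(R)`
    have hterm : ∀ k, (∫ s in b (k+1)..b k, f s) ≤ g k * what ω R := by
      intro k
      have hbk1 := hbmem (k+1)
      have hbk := hbmem k
      have hbk1' : b (k+1) ∈ Icc (0:ℝ) 1 := ⟨hbk1.1, le_trans hbk1.2 hR1.le⟩
      have hbk' : b k ∈ Icc (0:ℝ) 1 := ⟨hbk.1, le_trans hbk.2 hR1.le⟩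
      have hgW : 0 ≤ g k * what ω R := mul_nonneg (hgpos k) hWnn
      rcases le_or_gt (1 - 2 ^ k / x) 0 with hneg | hpos
      · -- b k = 0, so b (k+1) = 0 and the integral vanishes
        have hbk0 : b k = 0 := max_eq_right hneg
        have hbk10 : b (k+1) = 0 := le_antisymm (hbk0 ▸ hbanti k) hbk1.1
        rw [hbk0, hbk10, intervalIntegral.integral_same]
        exact hgW
      · have hbkeq : b k = 1 - 2 ^ k / x := max_eq_left hpos.le
        -- pointwise bound `s^x ≤ exp(-2^k)` on `[b (k+1), b k]`
        have hpow : (b k) ^ x ≤ Real.exp (-(2 ^ k : ℝ)) := by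
          have hu : 1 - 2 ^ k / x ≤ Real.exp (-(2 ^ k / x)) := by
            have := Real.add_one_le_exp (-(2 ^ k / x))
            linarith
          have h1 : (b k) ^ x ≤ (Real.exp (-(2 ^ k / x))) ^ x := by
            rw [hbkeq]
            exact Real.rpow_le_rpow hpos.le hu hx0.le
          have h2 : (Real.exp (-(2 ^ k / x))) ^ x = Real.exp (-(2 ^ k : ℝ)) := by
            rw [← Real.exp_mul]
            congr 1
            field_simp
          rw [← h2]
          exact h1
        have hstep1 : (∫ s in b (k+1)..b k, f s)
            ≤ ∫ s in b (k+1)..b k, Real.exp (-(2 ^ k : ℝ)) * ω s := by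
          refine intervalIntegral.integral_mono_on (hbanti k)
            (hii hbk1' hbk') ((ii_omega hω hbk1' hbk').const_mul _) ?_
          intro s hs
          have hs0 : 0 ≤ s := le_trans hbk1.1 hs.1
          have hs1 : s < 1 := lt_of_le_of_lt (le_trans hs.2 hbk.2) hR1
          have hω_nn : 0 ≤ ω s := (hω.1 s ⟨hs0, hs1⟩).le
          have hsx : s ^ x ≤ Real.exp (-(2 ^ k : ℝ)) :=
            le_trans (Real.rpow_le_rpow hs0 hs.2 hx0.le) hpow
          exact mul_le_mul_of_nonneg_right hsx hω_nn
        have hstep2 : (∫ s in b (k+1)..b k, Real.exp (-(2 ^ k : ℝ)) * ω s)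
            = Real.exp (-(2 ^ k : ℝ)) * ∫ s in b (k+1)..b k, ω s :=
          intervalIntegral.integral_const_mul _ _
        have hstep3 : (∫ s in b (k+1)..b k, ω s) ≤ what ω (b (k+1)) := by
          have := what_split hω hbk1' hbk'
          have := what_nonneg hω hbk'
          linarith
        have hstep4 : what ω (b (k+1)) ≤ C ^ (k+1) * what ω R := by
          refine iterate hω hC hdb (k+1) (b (k+1)) R hbk1.1
            (lt_of_le_of_lt hbk1.2 hR1) hR0 hR1 ?_
          have h1 : 1 - 2 ^ (k+1) / x ≤ b (k+1) := le_max_left _ _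
          have h2 : 2 ^ (k+1) * (1 - R) = 2 ^ (k+1) / x := by
            simp only [hR]
            ring
          rw [h2]
          linarith
        calc (∫ s in b (k+1)..b k, f s)
            ≤ Real.exp (-(2 ^ k : ℝ)) * ∫ s in b (k+1)..b k, ω s := by
              rw [← hstep2]; exact hstep1
          _ ≤ Real.exp (-(2 ^ k : ℝ)) * (C ^ (k+1) * what ω R) := by
              apply mul_le_mul_of_nonneg_left _ (Real.exp_pos _).le
              exact le_trans hstep3 hstep4
          _ = g k * what ω R := by simp only [hg]; ring
    -- sum the pieces
    have hii_b : ∀ k, IntervalIntegrable f volume (b k) (b (k+1)) := by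
      intro k
      have hbk1 := hbmem (k+1)
      have hbk := hbmem k
      exact hii ⟨hbk.1, le_trans hbk.2 hR1.le⟩ ⟨hbk1.1, le_trans hbk1.2 hR1.le⟩
    have hsum_eq : ∑ k ∈ Finset.range (N+1), ∫ s in b k..b (k+1), f s
        = ∫ s in (b 0)..(b (N+1)), f s :=
      intervalIntegral.sum_integral_adjacent_intervals (fun k _ => hii_b k)
    have hint0R : (∫ s in (0:ℝ)..R, f s)
        = ∑ k ∈ Finset.range (N+1), ∫ s in b (k+1)..b k, f s := by
      have h1 : (∫ s in (b 0)..(b (N+1)), f s) = - ∫ s in (0:ℝ)..R, f s := by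
        rw [hb0, hbN]
        exact intervalIntegral.integral_symm _ _
      have h3 : ∑ k ∈ Finset.range (N+1), ∫ s in b (k+1)..b k, f s
          = - ∑ k ∈ Finset.range (N+1), ∫ s in b k..b (k+1), f s := by
        rw [← Finset.sum_neg_distrib]
        exact Finset.sum_congr rfl (fun k _ => intervalIntegral.integral_symm _ _)
      rw [h3, hsum_eq, h1, neg_neg]
    have hboundR : (∫ s in (0:ℝ)..R, f s) ≤ (∑' n, g n) * what ω R := by
      rw [hint0R]
      calc ∑ k ∈ Finset.range (N+1), ∫ s in b (k+1)..b k, f s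
          ≤ ∑ k ∈ Finset.range (N+1), g k * what ω R :=
            Finset.sum_le_sum (fun k _ => hterm k)
        _ = (∑ k ∈ Finset.range (N+1), g k) * what ω R := by
            rw [Finset.sum_mul]
        _ ≤ (∑' n, g n) * what ω R := by
            apply mul_le_mul_of_nonneg_right _ hWnn
            exact Summable.sum_le_tsum _ (fun i _ => hgpos i) hsum
    -- the piece on `[R,1]`
    have hboundtail : (∫ s in R..1, f s) ≤ what ω R := by
      rw [what]
      refine intervalIntegral.integral_mono_ae_restrict hR1.le
        (hii hRmem ⟨zero_le_one, le_refl 1⟩) (ii_omega hω hRmem ⟨zero_le_one, le_refl 1⟩) ?_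
      filter_upwards [ae_ne_one (Icc R 1), ae_restrict_mem measurableSet_Icc] with s hs1 hs2
      have hs0 : 0 ≤ s := le_trans hR0 hs2.1
      have hω_nn : 0 ≤ ω s := (hω.1 s ⟨hs0, lt_of_le_of_ne hs2.2 hs1⟩).le
      have hsx : s ^ x ≤ 1 := Real.rpow_le_one hs0 hs2.2 hx0.le
      calc s ^ x * ω s ≤ 1 * ω s := mul_le_mul_of_nonneg_right hsx hω_nn
        _ = ω s := one_mul _
    have hsplit01 : (∫ s in (0:ℝ)..R, f s) + (∫ s in R..1, f s) = ∫ s in (0:ℝ)..1, f s :=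
      intervalIntegral.integral_add_adjacent_intervals
        (hii ⟨le_refl 0, zero_le_one⟩ hRmem) (hii hRmem ⟨zero_le_one, le_refl 1⟩)
    calc (∫ s in (0:ℝ)..1, f s)
        = (∫ s in (0:ℝ)..R, f s) + (∫ s in R..1, f s) := hsplit01.symm
      _ ≤ (∑' n, g n) * what ω R + what ω R := add_le_add hboundR hboundtail
      _ = ((∑' n, g n) + 1) * what ω R := by ring
end
end

section
/- Let ω be a doubling weight on [0,1) and define ω*(r) = ∫_r^1 ω(s) log(s/r) s ds for r ∈ (0,1). Then there exist constants c, C > 0 and r_0 ∈ (0,1) such that for all r ∈ (r_0, 1), c (1-r) ω̂(r) ≤ ω*(r) ≤ C (1-r) ω̂(r), where ω̂(r) = ∫_r^1 ω(t) dt. -/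
open MeasureTheory Set

noncomputable section

/-- The associated weight `ω*(r) = ∫_r^1 ω(s) log(s/r) s ds`. -/
def wstar (ω : ℝ → ℝ) (r : ℝ) : ℝ := ∫ s in r..1, ω s * Real.log (s / r) * s

lemma my_integral_mono_Ico {f g : ℝ → ℝ} {a b : ℝ} (hab : a ≤ b)
    (hf : IntervalIntegrable f volume a b) (hg : IntervalIntegrable g volume a b)
    (h : ∀ s ∈ Set.Ico a b, f s ≤ g s) : (∫ s in a..b, f s) ≤ ∫ s in a..b, g s := by
  apply intervalIntegral.integral_mono_ae_restrict hab hf hg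
  have h1 : ∀ᵐ s ∂(volume.restrict (Set.Icc a b)), s ∈ Set.Icc a b :=
    ae_restrict_mem measurableSet_Icc
  have h2 : ∀ᵐ s ∂(volume.restrict (Set.Icc a b)), s ≠ b := by
    refine ae_restrict_of_ae ?_
    have : volume ({b} : Set ℝ) = 0 := Real.volume_singleton
    rw [ae_iff]; simpa using this
  filter_upwards [h1, h2] with s hs hne
  exact h s ⟨hs.1, lt_of_le_of_ne hs.2 hne⟩


/-- For a doubling weight, `ω*(r) ≈ (1-r) ω̂(r)` as `r → 1`. -/
theorem wstar_comparable (ω : ℝ → ℝ) (hω : IsRadialWeight ω) (hd : IsDoubling ω) :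
    ∃ c > (0:ℝ), ∃ C > (0:ℝ), ∃ r₀ ∈ Set.Ioo (0:ℝ) 1, ∀ r ∈ Set.Ioo r₀ 1,
      c * ((1 - r) * what ω r) ≤ wstar ω r ∧ wstar ω r ≤ C * ((1 - r) * what ω r) := by
  obtain ⟨hpos, hmeas, hint⟩ := hω
  obtain ⟨C, hC, hdo⟩ := hd
  refine ⟨1/(4*C), by positivity, 2, by norm_num, 1/2, by norm_num, ?_⟩
  intro r hr
  obtain ⟨hr2, hr1⟩ := hr
  have hr0 : (0:ℝ) < r := by linarith
  set m : ℝ := (1 + r) / 2 with hm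
  have hrm : r < m := by rw [hm]; linarith
  have hm1 : m < 1 := by rw [hm]; linarith
  -- integrability of ω on (r,1]
  have hIoc : IntegrableOn ω (Set.Ioc r 1) := by
    have h1 : IntegrableOn ω (Set.Ioo r 1) :=
      hint.mono_set (fun x hx => ⟨by linarith [hx.1], hx.2⟩)
    exact h1.congr_set_ae Ioo_ae_eq_Ioc.symm
  have hω_int : IntervalIntegrable ω volume r 1 :=
    (intervalIntegrable_iff_integrableOn_Ioc_of_le hr1.le).2 hIoc
  -- integrability of the full integrand
  have hfmeas : Measurable (fun s => ω s * Real.log (s / r) * s) :=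
    (hmeas.mul (Real.measurable_log.comp (measurable_id.div_const r))).mul measurable_id
  have hf_int : IntervalIntegrable (fun s => ω s * Real.log (s / r) * s) volume r 1 := by
    rw [intervalIntegrable_iff_integrableOn_Ioc_of_le hr1.le]
    refine Integrable.mono' (hIoc.norm.const_mul (Real.log (1/r)))
      hfmeas.aestronglyMeasurable ?_
    filter_upwards [self_mem_ae_restrict measurableSet_Ioc] with s hs
    have hs1 : s ≤ 1 := hs.2
    have hsr : r < s := hs.1
    have hlog0 : 0 ≤ Real.log (s / r) := Real.log_nonneg (by rw [le_div_iff₀ hr0]; linarith)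
    have hlogle : Real.log (s / r) ≤ Real.log (1 / r) := by
      apply Real.log_le_log (div_pos (by linarith) hr0)
      gcongr
    rw [norm_mul, norm_mul, Real.norm_eq_abs (Real.log _), Real.norm_eq_abs s]
    rw [abs_of_nonneg hlog0, abs_of_nonneg (by linarith : (0:ℝ) ≤ s)]
    calc ‖ω s‖ * Real.log (s / r) * s ≤ ‖ω s‖ * Real.log (1 / r) * 1 := by
          apply mul_le_mul (mul_le_mul le_rfl hlogle hlog0 (norm_nonneg _)) hs1 (by linarith)
            (mul_nonneg (norm_nonneg _) (Real.log_nonneg (by rw [le_div_iff₀ hr0]; linarith)))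
      _ = Real.log (1 / r) * ‖ω s‖ := by ring
  -- UPPER BOUND
  have hub : wstar ω r ≤ 2 * ((1 - r) * what ω r) := by
    have h1 : (∫ s in r..1, ω s * Real.log (s / r) * s) ≤ ∫ s in r..1, (2 * (1 - r)) * ω s := by
      apply my_integral_mono_Ico hr1.le hf_int (hω_int.const_mul _)
      intro s hs
      have hωs : 0 < ω s := hpos s ⟨by linarith [hs.1], hs.2⟩
      have hsr : r ≤ s := hs.1
      have hlog0 : 0 ≤ Real.log (s / r) := Real.log_nonneg (by rw [le_div_iff₀ hr0]; linarith)
      have hlogub : Real.log (s / r) ≤ 2 * (1 - r) := by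
        have h := Real.log_le_sub_one_of_pos (div_pos (by linarith : (0:ℝ) < s) hr0)
        have hs1 : s ≤ 1 := hs.2.le
        have h2 : s / r - 1 ≤ 2 * (1 - r) := by
          rw [div_sub_one (ne_of_gt hr0), div_le_iff₀ hr0]
          nlinarith
        linarith
      have hs1 : s ≤ 1 := hs.2.le
      have hs0 : 0 ≤ s := by linarith
      nlinarith [mul_nonneg hωs.le hlog0]
    have h2 : (∫ s in r..1, (2 * (1 - r)) * ω s) = (2 * (1 - r)) * ∫ s in r..1, ω s :=
      intervalIntegral.integral_const_mul _ _
    unfold wstar what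
    rw [h2] at h1
    linarith [h1]
  -- LOWER BOUND
  have hf_int1 : IntervalIntegrable (fun s => ω s * Real.log (s / r) * s) volume r m :=
    hf_int.mono_set (by
      rw [uIcc_of_le hrm.le, uIcc_of_le hr1.le]
      exact Set.Icc_subset_Icc le_rfl hm1.le)
  have hf_int2 : IntervalIntegrable (fun s => ω s * Real.log (s / r) * s) volume m 1 :=
    hf_int.mono_set (by
      rw [uIcc_of_le hm1.le, uIcc_of_le hr1.le]
      exact Set.Icc_subset_Icc hrm.le le_rfl)
  have hω_int2 : IntervalIntegrable ω volume m 1 :=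
    hω_int.mono_set (by
      rw [uIcc_of_le hm1.le, uIcc_of_le hr1.le]
      exact Set.Icc_subset_Icc hrm.le le_rfl)
  have hsplit : (∫ s in r..m, ω s * Real.log (s / r) * s)
      + (∫ s in m..1, ω s * Real.log (s / r) * s) = wstar ω r :=
    intervalIntegral.integral_add_adjacent_intervals hf_int1 hf_int2
  have h10 : 0 ≤ ∫ s in r..m, ω s * Real.log (s / r) * s := by
    apply intervalIntegral.integral_nonneg hrm.le
    intro u hu
    have hωu : 0 < ω u := hpos u ⟨by linarith [hu.1], by linarith [hu.2]⟩
    have hlog0 : 0 ≤ Real.log (u / r) := Real.log_nonneg (by rw [le_div_iff₀ hr0]; linarith [hu.1])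
    have hu0 : (0:ℝ) ≤ u := by linarith [hu.1]
    positivity
  have h2 : (∫ s in m..1, ((1 - r) / 4) * ω s) ≤ ∫ s in m..1, ω s * Real.log (s / r) * s := by
    apply my_integral_mono_Ico hm1.le (hω_int2.const_mul _) hf_int2
    intro s hs
    have hsm : m ≤ s := hs.1
    have hs1 : s < 1 := hs.2
    have hs0 : (0:ℝ) < s := by rw [hm] at hsm; linarith
    have hωs : 0 < ω s := hpos s ⟨hs0.le, hs1⟩
    have hhalf : (1:ℝ)/2 ≤ s := by rw [hm] at hsm; linarith
    -- log lower bound: log(s/r) ≥ 1 - r/s ≥ (1-r)/2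
    have hlog : (1 - r) / 2 ≤ Real.log (s / r) := by
      have h := Real.log_le_sub_one_of_pos (div_pos hr0 hs0)
      have heq : Real.log (s / r) = - Real.log (r / s) := by
        rw [← Real.log_inv, inv_div]
      have hrs : r / s ≤ (1 + r) / 2 := by
        rw [div_le_iff₀ hs0]
        nlinarith [sq_nonneg (1 - r), hsm]
      rw [heq]
      linarith
    have hlog0' : 0 ≤ Real.log (s / r) := by linarith
    have h4 : ω s * ((1 - r) / 2) ≤ ω s * Real.log (s / r) :=
      mul_le_mul_of_nonneg_left hlog hωs.le
    have h5 : (ω s * ((1 - r) / 2)) * (1 / 2) ≤ (ω s * Real.log (s / r)) * s :=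
      mul_le_mul h4 hhalf (by norm_num) (mul_nonneg hωs.le hlog0')
    calc ((1 - r) / 4) * ω s = (ω s * ((1 - r) / 2)) * (1 / 2) := by ring
      _ ≤ ω s * Real.log (s / r) * s := h5
  have h3 : (∫ s in m..1, ((1 - r) / 4) * ω s) = ((1 - r) / 4) * what ω m :=
    intervalIntegral.integral_const_mul _ _
  have hdr : what ω r ≤ C * what ω m := hdo r ⟨hr0.le, hr1⟩
  have hlb : 1 / (4 * C) * ((1 - r) * what ω r) ≤ wstar ω r := by
    have hwm : what ω r / C ≤ what ω m := by
      rw [div_le_iff₀ hC]; linarith [hdr]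
    have hmul : ((1 - r) / 4) * (what ω r / C) ≤ ((1 - r) / 4) * what ω m :=
      mul_le_mul_of_nonneg_left hwm (by linarith)
    have heq : 1 / (4 * C) * ((1 - r) * what ω r) = ((1 - r) / 4) * (what ω r / C) := by
      field_simp
    rw [heq]
    calc ((1 - r) / 4) * (what ω r / C) ≤ ((1 - r) / 4) * what ω m := hmul
      _ = ∫ s in m..1, ((1 - r) / 4) * ω s := h3.symm
      _ ≤ ∫ s in m..1, ω s * Real.log (s / r) * s := h2
      _ ≤ wstar ω r := by linarith [h10, hsplit]
  exact ⟨hlb, hub⟩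
end
end
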